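/- Let R be a commutative ring with identity and let V be a free R-module of rank m with m ≥ n. Then the algebra homomorphism A^R(y_1,…,y_n) → Hom_R(C(V)^{⊗n}, T(V)) obtained by evaluating θ_n at V — a homomorphism into the convolution algebra of R-linear maps from the coalgebra C(V)^{⊗n} to the algebra T(V) — is injective. -/

import Mathlib

universe u

open TensorProduct

section CVCoalg
variable (R : Type u) [CommRing R] (V : Type u) [AddCommGroup V] [Module R V]

/-- The comultiplication on `C(V) = J₁(V) = R × V`, with `1 = (1,0)` grouplike and `V`
primitive. -/
noncomputable def cvComul : (R × V) →ₗ[R] (R × V) ⊗[R] (R × V) :=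
  (TensorProduct.mk R (R × V) (R × V)).flip ((1:R), (0:V))
    + (TensorProduct.mk R (R × V) (R × V) ((1:R), (0:V))) ∘ₗ (LinearMap.inr R R V) ∘ₗ
      (LinearMap.snd R R V)

lemma cvComul_apply (r : R) (v : V) :
    cvComul R V (r, v) = (r, v) ⊗ₜ[R] ((1:R), (0:V)) + ((1:R), (0:V)) ⊗ₜ[R] ((0:R), v) := by
  simp [cvComul]

lemma cv_decomp (r : R) (v : V) : ((r,v) : R × V) = r • ((1:R),(0:V)) + ((0:R), v) := by
  simp [Prod.ext_iff]

/-- The coalgebra structure on `C(V) = R × V = J₁(V)`. -/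
noncomputable instance cvCoalgebra : Coalgebra R (R × V) where
  comul := cvComul R V
  counit := LinearMap.fst R R V
  coassoc := by
    apply LinearMap.ext
    rintro ⟨r, v⟩
    simp only [LinearMap.comp_apply, cvComul_apply, map_add, LinearMap.rTensor_tmul,
      LinearMap.lTensor_tmul, cvComul_apply, LinearEquiv.coe_coe, TensorProduct.assoc_tmul,
      TensorProduct.tmul_zero, TensorProduct.zero_tmul, add_zero, zero_add,
      TensorProduct.add_tmul, TensorProduct.tmul_add, Prod.mk_zero_zero]
    abel
  rTensor_counit_comp_comul := by
    apply LinearMap.ext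
    rintro ⟨r, v⟩
    rw [LinearMap.comp_apply]
    show (LinearMap.fst R R V).rTensor (R × V) (cvComul R V (r, v)) = _
    rw [cvComul_apply]
    simp only [map_add, LinearMap.rTensor_tmul, LinearMap.fst_apply, TensorProduct.mk_apply]
    rw [cv_decomp R V r v, TensorProduct.tmul_add, TensorProduct.tmul_smul,
      show r • ((1:R) ⊗ₜ[R] ((1:R),(0:V))) = (r • (1:R)) ⊗ₜ[R] ((1:R),(0:V)) from
        (TensorProduct.smul_tmul' r _ _).symm]
    simp
  lTensor_counit_comp_comul := by
    apply LinearMap.ext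
    rintro ⟨r, v⟩
    rw [LinearMap.comp_apply]
    show (LinearMap.fst R R V).lTensor (R × V) (cvComul R V (r, v)) = _
    rw [cvComul_apply]
    simp

/-- The inclusion `J₁(V) = C(V) → T(V)`, `(r,v) ↦ r·1 + v`. -/
noncomputable def inclC : (R × V) →ₗ[R] TensorAlgebra R V :=
  (Algebra.linearMap R (TensorAlgebra R V)) ∘ₗ (LinearMap.fst R R V)
    + (TensorAlgebra.ι R) ∘ₗ (LinearMap.snd R R V)

end CVCoalg

section Cpow
variable (R : Type u) [CommRing R] (V : Type u) [AddCommGroup V] [Module R V]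

/-- `C(V)^{⊗n}` as a bundled module, via iterated binary tensor products. -/
noncomputable def CpowM : ℕ → ModuleCat.{u} R
  | 0 => ModuleCat.of R R
  | n+1 => ModuleCat.of R ((CpowM n) ⊗[R] (R × V))

/-- The underlying type of `C(V)^{⊗n}`. -/
abbrev Cpow (n : ℕ) : Type u := CpowM R V n

/-- The coalgebra structure on `C(V)^{⊗n}` (iterated tensor product of coalgebras). -/
noncomputable instance cpowCoalgebra : ∀ n, Coalgebra R (Cpow R V n)
  | 0 => inferInstanceAs (Coalgebra R R)
  | n+1 => letI := cpowCoalgebra n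
           inferInstanceAs (Coalgebra R ((Cpow R V n) ⊗[R] (R × V)))

/-- The pure tensor `x 0 ⊗ ⋯ ⊗ x (n-1)` in `C(V)^{⊗n}`. -/
noncomputable def elemC : ∀ n, (Fin n → R × V) → Cpow R V n
  | 0, _ => (1 : R)
  | n+1, x => show (Cpow R V n) ⊗[R] (R × V) from
      (elemC n (fun i => x i.castSucc)) ⊗ₜ[R] (x (Fin.last n))

/-- The multiplication map `π : C(V)^{⊗n} → T(V)`, whose image is `J_n(V)`. -/
noncomputable def piMul : ∀ n, Cpow R V n →ₗ[R] TensorAlgebra R V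
  | 0 => Algebra.linearMap R (TensorAlgebra R V)
  | n+1 => (LinearMap.mul' R (TensorAlgebra R V)) ∘ₗ
      (TensorProduct.map (piMul n) (inclC R V))

end Cpow

section Conv
variable (R : Type u) [CommRing R]

/-- The convolution product `f * g = μ ∘ (f ⊗ g) ∘ Δ` on linear maps from a coalgebra to an
algebra. -/
noncomputable def conv {C : Type u} [AddCommGroup C] [Module R C] [Coalgebra R C]
    {A : Type u} [Ring A] [Algebra R A] (f g : C →ₗ[R] A) : C →ₗ[R] A :=
  (LinearMap.mul' R A) ∘ₗ (TensorProduct.map f g) ∘ₗ Coalgebra.comul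

/-- The convolution unit `η ∘ ε`. -/
noncomputable def convOne {C : Type u} [AddCommGroup C] [Module R C] [Coalgebra R C]
    (A : Type u) [Ring A] [Algebra R A] : C →ₗ[R] A :=
  (Algebra.linearMap R A) ∘ₗ Coalgebra.counit

end Conv

section TAlg
variable (R : Type u) [CommRing R] (V : Type u) [AddCommGroup V] [Module R V]

/-- The comultiplication of the tensor algebra `T(V)`, with `V` primitive. -/
noncomputable def psiT : TensorAlgebra R V →ₐ[R] (TensorAlgebra R V) ⊗[R] (TensorAlgebra R V) :=
  TensorAlgebra.lift R
    (((TensorProduct.mk R (TensorAlgebra R V) (TensorAlgebra R V)).flip 1) ∘ₗ (TensorAlgebra.ι R)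
      + (TensorProduct.mk R (TensorAlgebra R V) (TensorAlgebra R V) 1) ∘ₗ (TensorAlgebra.ι R))

/-- The counit (augmentation) of the tensor algebra `T(V)`. -/
noncomputable def epsT : TensorAlgebra R V →ₐ[R] R :=
  TensorAlgebra.lift R (0 : V →ₗ[R] R)

variable {V} in
/-- Functoriality of the tensor algebra. -/
noncomputable def tMap {W : Type u} [AddCommGroup W] [Module R W] (f : V →ₗ[R] W) :
    TensorAlgebra R V →ₐ[R] TensorAlgebra R W :=
  TensorAlgebra.lift R ((TensorAlgebra.ι R) ∘ₗ f)

variable {V} in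
/-- A linear map from a coalgebra to `T(V)` is a morphism of coalgebras. -/
noncomputable def IsCoalgMapT {C : Type u} [AddCommGroup C] [Module R C] [Coalgebra R C]
    (f : C →ₗ[R] TensorAlgebra R V) : Prop :=
  (psiT R V).toLinearMap ∘ₗ f = (TensorProduct.map f f) ∘ₗ Coalgebra.comul
    ∧ (epsT R V).toLinearMap ∘ₗ f = Coalgebra.counit

variable {V} in
/-- Functoriality of `C(−)^{⊗n}`. -/
noncomputable def cnMap {W : Type u} [AddCommGroup W] [Module R W] (f : V →ₗ[R] W) :
    ∀ n, Cpow R V n →ₗ[R] Cpow R W n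
  | 0 => LinearMap.id
  | n+1 => show ((Cpow R V n) ⊗[R] (R × V)) →ₗ[R] ((Cpow R W n) ⊗[R] (R × W)) from
      TensorProduct.map (cnMap f n) (LinearMap.prodMap LinearMap.id f)

end TAlg
section CohenAlgebra
variable (R : Type u) [CommRing R]

/-- The relation defining the Cohen algebra `A^R(y_1, …, y_n)`: every monomial in the
generators with a repeated index is identified with `0`. -/
def cohenRel (n : ℕ) : FreeAlgebra R (Fin n) → FreeAlgebra R (Fin n) → Prop :=
  fun a b => b = 0 ∧ ∃ (t : ℕ) (f : Fin t → Fin n), ¬ Function.Injective f ∧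
    a = (List.ofFn fun s => FreeAlgebra.ι R (f s)).prod

/-- The Cohen algebra `A^R(y_1, …, y_n)`. -/
abbrev CohenAlgebra (n : ℕ) : Type u := RingQuot (cohenRel R n)

/-- The generator `y_j` of the Cohen algebra. -/
noncomputable def ya {n : ℕ} (j : Fin n) : CohenAlgebra R n :=
  RingQuot.mkAlgHom R (cohenRel R n) (FreeAlgebra.ι R j)

end CohenAlgebra
noncomputable section CohenProof

namespace CohenProof
open TensorProduct Coalgebra

section ConvLemmas
variable {R : Type u} [CommRing R]
variable {C : Type u} [AddCommGroup C] [Module R C] [Coalgebra R C]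
variable {A : Type u} [Ring A] [Algebra R A]

lemma conv_apply_repr (f g : C →ₗ[R] A) {ι : Type*} (a : C) (repr : Coalgebra.Repr R a ι) :
    conv R f g a = ∑ i ∈ repr.index, f (repr.left i) * g (repr.right i) := by
  have : Coalgebra.comul a = ∑ i ∈ repr.index, repr.left i ⊗ₜ[R] repr.right i := repr.eq.symm
  simp [conv, this, map_sum, LinearMap.mul'_apply]

lemma conv_add_left (f g h : C →ₗ[R] A) : conv R (f + g) h = conv R f h + conv R g h := by
  simp [conv, TensorProduct.map_add_left, LinearMap.add_comp, LinearMap.comp_add]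

lemma conv_add_right (f g h : C →ₗ[R] A) : conv R f (g + h) = conv R f g + conv R f h := by
  simp [conv, TensorProduct.map_add_right, LinearMap.add_comp, LinearMap.comp_add]

lemma conv_smul_left (c : R) (f g : C →ₗ[R] A) : conv R (c • f) g = c • conv R f g := by
  simp [conv, TensorProduct.map_smul_left, LinearMap.smul_comp, LinearMap.comp_smul]

lemma conv_smul_right (c : R) (f g : C →ₗ[R] A) : conv R f (c • g) = c • conv R f g := by
  simp [conv, TensorProduct.map_smul_right, LinearMap.smul_comp, LinearMap.comp_smul]

lemma conv_zero_left (g : C →ₗ[R] A) : conv R (0 : C →ₗ[R] A) g = 0 := by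
  simp [conv, TensorProduct.map_zero_left, LinearMap.zero_comp, LinearMap.comp_zero]

lemma conv_zero_right (g : C →ₗ[R] A) : conv R g (0 : C →ₗ[R] A) = 0 := by
  simp [conv, TensorProduct.map_zero_right, LinearMap.zero_comp, LinearMap.comp_zero]

lemma one_conv (f : C →ₗ[R] A) : conv R (convOne R A) f = f := by
  ext a
  set r := Coalgebra.Repr.arbitrary R a
  rw [conv_apply_repr _ _ _ r]
  have key := Coalgebra.sum_counit_tmul_map_eq (R := R) f a (repr := r)
  have := congrArg (TensorProduct.lid R A) key
  simp only [map_sum, TensorProduct.lid_tmul, one_smul] at this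
  calc ∑ i ∈ r.index, convOne R A (r.left i) * f (r.right i)
      = ∑ i ∈ r.index, Coalgebra.counit (R := R) (r.left i) • f (r.right i) := by
        refine Finset.sum_congr rfl fun i _ => ?_
        simp [convOne, Algebra.smul_def]
    _ = f a := this

lemma conv_one (f : C →ₗ[R] A) : conv R f (convOne R A) = f := by
  ext a
  set r := Coalgebra.Repr.arbitrary R a
  rw [conv_apply_repr _ _ _ r]
  have key := Coalgebra.sum_map_tmul_counit_eq (R := R) f a (repr := r)
  have := congrArg (TensorProduct.rid R A) key
  simp only [map_sum, TensorProduct.rid_tmul, one_smul] at this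
  calc ∑ i ∈ r.index, f (r.left i) * convOne R A (r.right i)
      = ∑ i ∈ r.index, Coalgebra.counit (R := R) (r.right i) • f (r.left i) := by
        refine Finset.sum_congr rfl fun i _ => ?_
        simp only [convOne, LinearMap.comp_apply, Algebra.linearMap_apply]
        rw [← Algebra.commutes, ← Algebra.smul_def]
    _ = f a := this

lemma conv_assoc (f g h : C →ₗ[R] A) :
    conv R (conv R f g) h = conv R f (conv R g h) := by
  ext a
  set r := Coalgebra.Repr.arbitrary R a with hr
  set a₁ : (i : C × C) → Coalgebra.Repr R (r.left i) (C × C) := fun i => Coalgebra.Repr.arbitrary R (r.left i) with ha₁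
  set a₂ : (i : C × C) → Coalgebra.Repr R (r.right i) (C × C) := fun i => Coalgebra.Repr.arbitrary R (r.right i) with ha₂
  have key := Coalgebra.sum_map_tmul_tmul_eq (R := R) f g h a (repr := r) (a₁ := a₁) (a₂ := a₂)
  have key2 := congrArg (LinearMap.mul' R A ∘ₗ LinearMap.lTensor A (LinearMap.mul' R A)) key
  simp only [map_sum, LinearMap.comp_apply, LinearMap.lTensor_tmul, LinearMap.mul'_apply] at key2
  rw [conv_apply_repr _ _ _ r, conv_apply_repr _ _ _ r]
  calc ∑ i ∈ r.index, conv R f g (r.left i) * h (r.right i)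
      = ∑ i ∈ r.index, ∑ j ∈ (a₁ i).index,
          f ((a₁ i).left j) * (g ((a₁ i).right j) * h (r.right i)) := by
        refine Finset.sum_congr rfl fun i _ => ?_
        rw [conv_apply_repr _ _ _ (a₁ i), Finset.sum_mul]
        exact Finset.sum_congr rfl fun j _ => (mul_assoc _ _ _)
    _ = ∑ i ∈ r.index, ∑ j ∈ (a₂ i).index,
          f (r.left i) * (g ((a₂ i).left j) * h ((a₂ i).right j)) := key2.symm
    _ = ∑ i ∈ r.index, f (r.left i) * conv R g h (r.right i) := by
        refine Finset.sum_congr rfl fun i _ => ?_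
        rw [conv_apply_repr _ _ _ (a₂ i), Finset.mul_sum]

end ConvLemmas

/-- Type synonym carrying the convolution algebra structure. -/
def ConvAlg (R : Type u) [CommRing R] (C : Type u) [AddCommGroup C] [Module R C]
    [Coalgebra R C] (A : Type u) [Ring A] [Algebra R A] : Type u := C →ₗ[R] A

namespace ConvAlg
variable {R : Type u} [CommRing R]
variable {C : Type u} [AddCommGroup C] [Module R C] [Coalgebra R C]
variable {A : Type u} [Ring A] [Algebra R A]

instance : AddCommGroup (ConvAlg R C A) := inferInstanceAs (AddCommGroup (C →ₗ[R] A))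
instance : Module R (ConvAlg R C A) := inferInstanceAs (Module R (C →ₗ[R] A))
noncomputable instance : Mul (ConvAlg R C A) := ⟨fun f g => conv R f g⟩
noncomputable instance : One (ConvAlg R C A) := ⟨convOne R A⟩

/-- unfold the type synonym. -/
def toLin (f : ConvAlg R C A) : C →ₗ[R] A := f

lemma mul_def (f g : ConvAlg R C A) : f * g = conv R f g := rfl
lemma one_def : (1 : ConvAlg R C A) = convOne R A := rfl

noncomputable instance instRing : Ring (ConvAlg R C A) where
  __ := (inferInstance : AddCommGroup (ConvAlg R C A))
  mul_assoc := conv_assoc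
  one_mul := one_conv
  mul_one := conv_one
  left_distrib := conv_add_right
  right_distrib f g h := conv_add_left f g h
  zero_mul := conv_zero_left
  mul_zero := conv_zero_right

noncomputable instance instAlgebra : Algebra R (ConvAlg R C A) :=
  Algebra.ofModule (fun c f g => conv_smul_left c f g) (fun c f g => conv_smul_right c f g)

end ConvAlg

end CohenProof
end CohenProof
namespace CohenProof
open TensorProduct Coalgebra

section CpowLemmas
variable (R : Type u) [CommRing R] (V : Type u) [AddCommGroup V] [Module R V]

lemma cpow_counit_succ (n : ℕ) :
    (Coalgebra.counit (R := R) (A := Cpow R V (n+1)))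
      = LinearMap.mul' R R ∘ₗ
        TensorProduct.map (Coalgebra.counit (R := R) (A := Cpow R V n)) (LinearMap.fst R R V) := by
  refine TensorProduct.ext' fun a b => ?_
  rw [LinearMap.comp_apply, TensorProduct.map_tmul, LinearMap.mul'_apply, mul_comm]
  with_unfolding_all rfl

lemma cpow_comul_succ (n : ℕ) :
    (Coalgebra.comul (R := R) (A := Cpow R V (n+1)))
      = (TensorProduct.tensorTensorTensorComm R (Cpow R V n) (Cpow R V n) (R × V) (R × V)).toLinearMap
          ∘ₗ TensorProduct.map (Coalgebra.comul (R := R) (A := Cpow R V n)) (cvComul R V) := by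
  with_unfolding_all rfl

lemma cpow_counit_zero : (Coalgebra.counit (R := R) (A := Cpow R V 0)) = LinearMap.id := rfl

lemma cpow_comul_zero : (Coalgebra.comul (R := R) (A := Cpow R V 0)) = TensorProduct.mk R R R 1 := rfl

lemma elemC_succ (n : ℕ) (x : Fin (n+1) → R × V) :
    elemC R V (n+1) x
      = ((elemC R V n (fun i => x i.castSucc)) ⊗ₜ[R] (x (Fin.last n)) : (Cpow R V n) ⊗[R] (R × V)) := rfl

lemma counit_elemC (n : ℕ) (x : Fin n → R × V) :
    Coalgebra.counit (R := R) (elemC R V n x) = ∏ i, (x i).1 := by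
  induction n with
  | zero => simp [cpow_counit_zero, elemC]; rfl
  | succ n ih =>
    have happ : Coalgebra.counit (R := R) (elemC R V (n+1) x)
        = LinearMap.mul' R R ((TensorProduct.map (Coalgebra.counit (R := R) (A := Cpow R V n))
            (LinearMap.fst R R V)) ((elemC R V n fun i => x i.castSucc) ⊗ₜ[R] x (Fin.last n))) := by
      rw [cpow_counit_succ]; rfl
    rw [happ, Fin.prod_univ_castSucc]
    simp [ih]

/-- left component function for the comultiplication of `elemC`. -/
def xL (n : ℕ) (S : Fin n → Bool) (x : Fin n → R × V) : Fin n → R × V :=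
  fun i => if S i then x i else ((1:R), (0:V))

/-- right component function for the comultiplication of `elemC`. -/
def xR (n : ℕ) (S : Fin n → Bool) (x : Fin n → R × V) : Fin n → R × V :=
  fun i => if S i then ((1:R), (0:V)) else ((0:R), (x i).2)

lemma comul_elemC (n : ℕ) (x : Fin n → R × V) :
    Coalgebra.comul (R := R) (elemC R V n x)
      = ∑ S : Fin n → Bool, elemC R V n (xL R V n S x) ⊗ₜ[R] elemC R V n (xR R V n S x) := by
  induction n with
  | zero =>
    rw [Fintype.sum_unique]
    simp [cpow_comul_zero, elemC, xL, xR]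
    rfl
  | succ n ih =>
    have happ : Coalgebra.comul (R := R) (elemC R V (n+1) x)
        = (TensorProduct.tensorTensorTensorComm R (Cpow R V n) (Cpow R V n) (R × V) (R × V))
            ((TensorProduct.map (Coalgebra.comul (R := R) (A := Cpow R V n)) (cvComul R V))
              ((elemC R V n fun i => x i.castSucc) ⊗ₜ[R] x (Fin.last n))) := by
      rw [cpow_comul_succ]; rfl
    rw [happ, TensorProduct.map_tmul, ih, cvComul_apply, TensorProduct.tmul_add,
      TensorProduct.sum_tmul, TensorProduct.sum_tmul, map_add, map_sum, map_sum]
    simp only [TensorProduct.tensorTensorTensorComm_tmul]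
    have reindex := Fintype.sum_equiv (Fin.snocEquiv (fun _ => Bool))
      (fun p : Bool × (Fin n → Bool) =>
        elemC R V (n+1) (xL R V (n+1) (Fin.snoc p.2 p.1) x)
          ⊗ₜ[R] elemC R V (n+1) (xR R V (n+1) (Fin.snoc p.2 p.1) x))
      (fun S : Fin (n+1) → Bool =>
        elemC R V (n+1) (xL R V (n+1) S x) ⊗ₜ[R] elemC R V (n+1) (xR R V (n+1) S x))
      (fun p => rfl)
    rw [← reindex, Fintype.sum_prod_type, Fintype.sum_bool]
    have eL : ∀ (b : Bool) (S : Fin n → Bool),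
        elemC R V (n+1) (xL R V (n+1) (Fin.snoc S b) x)
          = (elemC R V n (xL R V n S (fun i => x i.castSucc)))
              ⊗ₜ[R] (if b then x (Fin.last n) else ((1:R),(0:V))) := by
      intro b S
      rw [elemC_succ]
      have h1 : (fun i : Fin n => xL R V (n+1) (Fin.snoc S b) x i.castSucc)
          = xL R V n S (fun i => x i.castSucc) := by
        funext i; simp [xL, Fin.snoc_castSucc]
      have h2 : xL R V (n+1) (Fin.snoc S b) x (Fin.last n)
          = (if b then x (Fin.last n) else ((1:R),(0:V))) := by
        simp [xL, Fin.snoc_last]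
      rw [h1, h2]
    have eR : ∀ (b : Bool) (S : Fin n → Bool),
        elemC R V (n+1) (xR R V (n+1) (Fin.snoc S b) x)
          = (elemC R V n (xR R V n S (fun i => x i.castSucc)))
              ⊗ₜ[R] (if b then ((1:R),(0:V)) else ((0:R), (x (Fin.last n)).2)) := by
      intro b S
      rw [elemC_succ]
      have h1 : (fun i : Fin n => xR R V (n+1) (Fin.snoc S b) x i.castSucc)
          = xR R V n S (fun i => x i.castSucc) := by
        funext i; simp [xR, Fin.snoc_castSucc]
      have h2 : xR R V (n+1) (Fin.snoc S b) x (Fin.last n)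
          = (if b then ((1:R),(0:V)) else ((0:R), (x (Fin.last n)).2)) := by
        simp [xR, Fin.snoc_last]
      rw [h1, h2]
    simp [eL, eR]
    rfl

end CpowLemmas
end CohenProof
namespace CohenProof
open TensorProduct Coalgebra

section Proj
variable (R : Type u) [CommRing R] (V : Type u) [AddCommGroup V] [Module R V]

lemma elemC_snoc (n : ℕ) (y : Fin n → R × V) (c : R × V) :
    elemC R V (n+1) (Fin.snoc y c)
      = ((elemC R V n y) ⊗ₜ[R] c : (Cpow R V n) ⊗[R] (R × V)) := by
  rw [elemC_succ]
  congr 1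
  · congr 1; funext i; rw [Fin.snoc_castSucc]
  · rw [Fin.snoc_last]

lemma span_elemC (n : ℕ) :
    Submodule.span R (Set.range (elemC R V n)) = ⊤ := by
  induction n with
  | zero =>
    rw [Submodule.eq_top_iff']
    intro r
    have : (r : Cpow R V 0) = (show R from r) • elemC R V 0 (fun i => i.elim0) := by
      show (show R from r) = (show R from r) • (1:R)
      rw [smul_eq_mul, mul_one]
    rw [this]
    exact Submodule.smul_mem _ _ (Submodule.subset_span ⟨_, rfl⟩)
  | succ n ih =>
    rw [Submodule.eq_top_iff']
    have key : ∀ z : (Cpow R V n) ⊗[R] (R × V),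
        z ∈ Submodule.span R (Set.range (elemC R V (n+1))) := by
      intro z
      induction z using TensorProduct.induction_on with
      | zero => exact Submodule.zero_mem _
      | add a b ha hb => exact Submodule.add_mem _ ha hb
      | tmul a c =>
        have ha : a ∈ Submodule.span R (Set.range (elemC R V n)) := by
          rw [ih]; trivial
        induction ha using Submodule.span_induction with
        | mem a hmem =>
          obtain ⟨y, rfl⟩ := hmem
          rw [← elemC_snoc]
          exact Submodule.subset_span ⟨_, rfl⟩
        | zero => rw [TensorProduct.zero_tmul]; exact Submodule.zero_mem _
        | add a b _ _ ha hb => rw [TensorProduct.add_tmul]; exact Submodule.add_mem _ ha hb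
        | smul r a _ ha => rw [← TensorProduct.smul_tmul']; exact Submodule.smul_mem _ _ ha
    exact fun z => key z

/-- the convolution `j`-th projection map `C(V)^{⊗n} → T(V)`. -/
noncomputable def pj : ∀ (n : ℕ), Fin n → (Cpow R V n →ₗ[R] TensorAlgebra R V)
  | 0 => fun j => j.elim0
  | n+1 => fun j =>
      if h : j = Fin.last n then
        (LinearMap.mul' R (TensorAlgebra R V)) ∘ₗ
          (TensorProduct.map
            ((Algebra.linearMap R (TensorAlgebra R V)) ∘ₗ
              (Coalgebra.counit (R := R) (A := Cpow R V n)))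
            ((TensorAlgebra.ι R) ∘ₗ (LinearMap.snd R R V)))
      else
        (LinearMap.mul' R (TensorAlgebra R V)) ∘ₗ
          (TensorProduct.map (pj n (j.castPred h))
            ((Algebra.linearMap R (TensorAlgebra R V)) ∘ₗ (LinearMap.fst R R V)))

lemma pj_elemC (n : ℕ) (j : Fin n) (x : Fin n → R × V) :
    pj R V n j (elemC R V n x)
      = (∏ i, if i = j then (1:R) else (x i).1) • (TensorAlgebra.ι R ((x j).2)) := by
  induction n with
  | zero => exact j.elim0
  | succ n ih =>
    by_cases h : j = Fin.last n
    · subst h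
      have : pj R V (n+1) (Fin.last n) (elemC R V (n+1) x)
          = (LinearMap.mul' R (TensorAlgebra R V)) (TensorProduct.map
              ((Algebra.linearMap R (TensorAlgebra R V)) ∘ₗ
                (Coalgebra.counit (R := R) (A := Cpow R V n)))
              ((TensorAlgebra.ι R) ∘ₗ (LinearMap.snd R R V))
              ((elemC R V n fun i => x i.castSucc) ⊗ₜ[R] x (Fin.last n))) := by
        simp only [pj]; rw [dif_pos trivial]; rfl
      rw [this, TensorProduct.map_tmul, LinearMap.mul'_apply]
      simp only [LinearMap.comp_apply, LinearMap.snd_apply, Algebra.linearMap_apply]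
      rw [counit_elemC, ← Algebra.smul_def, Fin.prod_univ_castSucc, if_pos rfl, mul_one]
      congr 1
      exact Finset.prod_congr rfl fun i _ => by
        rw [if_neg (Fin.castSucc_lt_last i).ne]
    · have : pj R V (n+1) j (elemC R V (n+1) x)
          = (LinearMap.mul' R (TensorAlgebra R V)) (TensorProduct.map
              (pj R V n (j.castPred h))
              ((Algebra.linearMap R (TensorAlgebra R V)) ∘ₗ (LinearMap.fst R R V))
              ((elemC R V n fun i => x i.castSucc) ⊗ₜ[R] x (Fin.last n))) := by
        simp only [pj]; rw [dif_neg h]; rfl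
      rw [this, TensorProduct.map_tmul, LinearMap.mul'_apply, ih]
      simp only [LinearMap.comp_apply, LinearMap.fst_apply, Algebra.linearMap_apply,
        Fin.castSucc_castPred]
      rw [smul_mul_assoc, ← Algebra.commutes ((x (Fin.last n)).1), ← Algebra.smul_def,
        smul_smul, Fin.prod_univ_castSucc, if_neg (Ne.symm h)]
      congr 1
      congr 1
      refine Finset.prod_congr rfl fun i _ => ?_
      have hiff : i.castSucc = j ↔ i = j.castPred h :=
        ⟨fun hc => by subst hc; rw [Fin.castPred_castSucc], fun hi => by rw [hi, Fin.castSucc_castPred]⟩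
      by_cases hij : i = j.castPred h
      · rw [if_pos (hiff.mpr hij), if_pos hij]
      · rw [if_neg (fun hc => hij (hiff.mp hc)), if_neg hij]

end Proj
end CohenProof
namespace CohenProof
open TensorProduct Coalgebra

section Word
variable (R : Type u) [CommRing R] (V : Type u) [AddCommGroup V] [Module R V]

/-- The convolution product of the projections along a word. -/
noncomputable def wordC (n : ℕ) : List (Fin n) → (Cpow R V n →ₗ[R] TensorAlgebra R V)
  | [] => convOne R (TensorAlgebra R V)
  | j :: l => conv R (pj R V n j) (wordC n l)

lemma conv_elemC (n : ℕ) (f g : Cpow R V n →ₗ[R] TensorAlgebra R V) (x : Fin n → R × V) :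
    conv R f g (elemC R V n x)
      = ∑ S : Fin n → Bool,
          f (elemC R V n (xL R V n S x)) * g (elemC R V n (xR R V n S x)) := by
  simp [conv, comul_elemC, map_sum, LinearMap.mul'_apply]

theorem wordC_elemC (n : ℕ) (l : List (Fin n)) (x : Fin n → R × V) :
    wordC R V n l (elemC R V n x)
      = if l.Nodup then
          (∏ i, if i ∈ l then (1:R) else (x i).1) •
            (l.map (fun j => TensorAlgebra.ι R ((x j).2))).prod
        else 0 := by
  induction l generalizing x with
  | nil =>
    simp only [wordC, List.nodup_nil, if_true, List.map_nil, List.prod_nil, List.not_mem_nil,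
      if_false]
    show (Algebra.linearMap R (TensorAlgebra R V) ∘ₗ Coalgebra.counit) (elemC R V n x) = _
    simp only [LinearMap.comp_apply, Algebra.linearMap_apply, counit_elemC]
    rw [Algebra.smul_def, mul_one]
  | cons j l ih =>
    simp only [wordC]
    rw [conv_elemC]
    by_cases hnd : (j :: l).Nodup
    · obtain ⟨hjl, hl⟩ := List.nodup_cons.mp hnd
      rw [if_pos hnd]
      rw [Finset.sum_eq_single (fun i => decide (i ∉ l))]
      · -- main term
        rw [pj_elemC, ih, if_pos hl]
        have h1 : (xL R V n (fun i => decide (i ∉ l)) x j).2 = (x j).2 := by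
          simp [xL, hjl]
        have h2 : (∏ i, if i = j then (1:R) else (xL R V n (fun i => decide (i ∉ l)) x i).1)
            = ∏ i, if i ∈ j :: l then (1:R) else (x i).1 := by
          refine Finset.prod_congr rfl fun i _ => ?_
          by_cases hij : i = j
          · subst hij; simp [List.mem_cons]
          · by_cases hil : i ∈ l
            · simp [xL, hij, hil, List.mem_cons]
            · simp [xL, hij, hil, List.mem_cons]
        have h3 : (∏ i, if i ∈ l then (1:R) else (xR R V n (fun i => decide (i ∉ l)) x i).1)
            = 1 := by
          refine Finset.prod_eq_one fun i _ => ?_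
          by_cases hil : i ∈ l
          · simp [hil]
          · simp [xR, hil]
        have h4 : (l.map fun k => TensorAlgebra.ι R ((xR R V n (fun i => decide (i ∉ l)) x k).2))
            = l.map fun k => TensorAlgebra.ι R ((x k).2) := by
          refine List.map_congr_left fun k hk => ?_
          simp [xR, hk]
        rw [h1, h2, h3, h4, one_smul, smul_mul_assoc, List.map_cons, List.prod_cons]
      · -- other terms vanish
        intro S _ hS
        obtain ⟨i, hi⟩ := Function.ne_iff.mp hS
        by_cases hil : i ∈ l
        · have hS0 : decide (i ∉ l) = false := by simp [hil]
          have hSi : S i = true := by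
            cases hSi : S i with
            | false => exact absurd (hSi.trans hS0.symm) hi
            | true => rfl
          rw [ih, if_pos hl]
          have hz : (0 : TensorAlgebra R V)
              ∈ l.map fun k => TensorAlgebra.ι R ((xR R V n S x k).2) :=
            List.mem_map.mpr ⟨i, hil, by simp [xR, hSi]⟩
          rw [List.prod_eq_zero hz, smul_zero, mul_zero]
        · have hS0 : decide (i ∉ l) = true := by simp [hil]
          have hSi : S i = false := by
            cases hSi : S i with
            | true => exact absurd (hSi.trans hS0.symm) hi
            | false => rfl
          rw [ih, if_pos hl]
          have hz : (∏ i', if i' ∈ l then (1:R) else (xR R V n S x i').1) = 0 :=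
            Finset.prod_eq_zero (Finset.mem_univ i) (by simp [xR, hSi, hil])
          rw [hz, zero_smul, mul_zero]
      · intro h; exact absurd (Finset.mem_univ _) h
    · rw [if_neg hnd]
      refine Finset.sum_eq_zero fun S _ => ?_
      by_cases hl : l.Nodup
      · have hjl : j ∈ l := by
          by_contra h; exact hnd (List.nodup_cons.mpr ⟨h, hl⟩)
        cases hSj : S j with
        | false =>
          rw [pj_elemC]
          have : ((xL R V n S x j).2) = 0 := by simp [xL, hSj]
          rw [this, map_zero, smul_zero, zero_mul]
        | true =>
          rw [ih, if_pos hl]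
          have hz : (0 : TensorAlgebra R V)
              ∈ l.map fun k => TensorAlgebra.ι R ((xR R V n S x k).2) :=
            List.mem_map.mpr ⟨j, hjl, by simp [xR, hSj]⟩
          rw [List.prod_eq_zero hz, smul_zero, mul_zero]
      · rw [ih, if_neg hl, mul_zero]

end Word
end CohenProof
namespace CohenProof
open TensorProduct Coalgebra

section Theta
variable (R : Type u) [CommRing R] (V : Type u) [AddCommGroup V] [Module R V] (n : ℕ)

/-- θ on the free algebra. -/
noncomputable def thetaFree : FreeAlgebra R (Fin n) →ₐ[R] ConvAlg R (Cpow R V n) (TensorAlgebra R V) :=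
  FreeAlgebra.lift R (fun j => (pj R V n j : ConvAlg R (Cpow R V n) (TensorAlgebra R V)))

lemma thetaFree_word (l : List (Fin n)) :
    thetaFree R V n ((l.map (FreeAlgebra.ι R)).prod) = wordC R V n l := by
  induction l with
  | nil =>
    rw [List.map_nil, List.prod_nil, map_one]
    show convOne R (TensorAlgebra R V) = _
    simp only [wordC]
  | cons j l ih =>
    rw [List.map_cons, List.prod_cons, map_mul, ih,
      show thetaFree R V n (FreeAlgebra.ι R j)
          = (pj R V n j : ConvAlg R (Cpow R V n) (TensorAlgebra R V)) from
        FreeAlgebra.lift_ι_apply _ _]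
    show conv R (pj R V n j) (wordC R V n l) = wordC R V n (j :: l)
    simp only [wordC]

lemma thetaFree_rel {a b : FreeAlgebra R (Fin n)} (h : cohenRel R n a b) :
    thetaFree R V n a = thetaFree R V n b := by
  obtain ⟨rfl, t, f, hfinj, rfl⟩ := h
  rw [map_zero]
  have hofn : (List.ofFn fun s => FreeAlgebra.ι R (f s))
      = (List.ofFn f).map (FreeAlgebra.ι R) := by
    rw [List.map_ofFn]; rfl
  rw [hofn, thetaFree_word]
  show wordC R V n (List.ofFn f) = (0 : Cpow R V n →ₗ[R] TensorAlgebra R V)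
  apply LinearMap.ext_on (span_elemC R V n)
  rintro _ ⟨x, rfl⟩
  rw [wordC_elemC, if_neg, LinearMap.zero_apply]
  rw [List.nodup_ofFn]
  exact hfinj

/-- θ on the Cohen algebra. -/
noncomputable def theta : CohenAlgebra R n →ₐ[R] ConvAlg R (Cpow R V n) (TensorAlgebra R V) :=
  RingQuot.liftAlgHom R ⟨thetaFree R V n, fun _ _ h => thetaFree_rel R V n h⟩

lemma theta_mk (a : FreeAlgebra R (Fin n)) :
    theta R V n (RingQuot.mkAlgHom R (cohenRel R n) a) = thetaFree R V n a := by
  rw [theta, RingQuot.liftAlgHom_mkAlgHom_apply]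

lemma theta_ya (j : Fin n) :
    theta R V n (ya R j) = (pj R V n j : ConvAlg R (Cpow R V n) (TensorAlgebra R V)) := by
  rw [ya, theta_mk]
  exact FreeAlgebra.lift_ι_apply _ _

end Theta
end CohenProof
namespace CohenProof
open TensorProduct Coalgebra

universe v

section Inj
variable (R : Type u) [CommRing R]

lemma basisFreeMonoid_apply {X : Type v} (L : FreeMonoid X) :
    FreeAlgebra.basisFreeMonoid R X L = ((FreeMonoid.toList L).map (FreeAlgebra.ι R)).prod := by
  rw [FreeAlgebra.basisFreeMonoid, Module.Basis.map_apply]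
  rw [show Finsupp.basisSingleOne L = Finsupp.single L (1:R) from by
    rw [Finsupp.coe_basisSingleOne]]
  show (FreeAlgebra.equivMonoidAlgebraFreeMonoid (R := R) (X := X)).symm
      ((MonoidAlgebra.coeffLinearEquiv R).symm (Finsupp.single L (1:R))) = _
  rw [show (FreeAlgebra.equivMonoidAlgebraFreeMonoid (R := R) (X := X)).symm
        ((MonoidAlgebra.coeffLinearEquiv R).symm (Finsupp.single L (1:R)))
      = ((MonoidAlgebra.lift R (FreeAlgebra R X) (FreeMonoid X))
          (FreeMonoid.lift (FreeAlgebra.ι R))) (MonoidAlgebra.single L (1:R)) from rfl]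
  rw [MonoidAlgebra.lift_single, one_smul, FreeMonoid.lift_apply]

lemma freeAlgebra_mem_span_words (n : ℕ) (b : FreeAlgebra R (Fin n)) :
    b ∈ Submodule.span R
      (Set.range fun l : List (Fin n) => (l.map (FreeAlgebra.ι R)).prod) := by
  set sp := Submodule.span R
    (Set.range fun l : List (Fin n) => (l.map (FreeAlgebra.ι R)).prod) with hsp
  have key : ∀ (a' b' : FreeAlgebra R (Fin n)), a' ∈ sp → b' ∈ sp → a' * b' ∈ sp := by
    intro a' b' ha' hb'
    induction ha' using Submodule.span_induction with
    | mem a hmem =>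
      induction hb' using Submodule.span_induction with
      | mem b hmemb =>
        obtain ⟨l1, rfl⟩ := hmem
        obtain ⟨l2, rfl⟩ := hmemb
        refine Submodule.subset_span ⟨l1 ++ l2, ?_⟩
        simp [List.map_append, List.prod_append]
      | zero => rw [mul_zero]; exact Submodule.zero_mem _
      | add x y _ _ hx hy => rw [mul_add]; exact Submodule.add_mem _ hx hy
      | smul r x _ hx => rw [mul_smul_comm]; exact Submodule.smul_mem _ _ hx
    | zero => rw [zero_mul]; exact Submodule.zero_mem _
    | add x y _ _ hx hy => rw [add_mul]; exact Submodule.add_mem _ hx hy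
    | smul r x _ hx => rw [smul_mul_assoc]; exact Submodule.smul_mem _ _ hx
  induction b using FreeAlgebra.induction with
  | grade0 r =>
    rw [Algebra.algebraMap_eq_smul_one]
    refine Submodule.smul_mem _ _ (Submodule.subset_span ⟨[], ?_⟩)
    simp
  | grade1 x =>
    refine Submodule.subset_span ⟨[x], ?_⟩
    simp
  | add a b ha hb => exact Submodule.add_mem _ ha hb
  | mul a b ha hb => exact key a b ha hb

variable (V : Type u) [AddCommGroup V] [Module R V]

lemma words_linearIndependent (n m : ℕ) (hmn : n ≤ m) (bV : Module.Basis (Fin m) R V) :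
    LinearIndependent R (fun l : {l : List (Fin n) // l.Nodup} =>
      (l.val.map fun j => TensorAlgebra.ι R (bV (Fin.castLE hmn j))).prod) := by
  set E := TensorAlgebra.equivFreeAlgebra bV
  set g : {l : List (Fin n) // l.Nodup} → FreeMonoid (Fin m) :=
    fun l => FreeMonoid.ofList (l.val.map (Fin.castLE hmn)) with hg
  have hginj : Function.Injective g := by
    intro a b hab
    apply Subtype.ext
    have h2 : a.val.map (Fin.castLE hmn) = b.val.map (Fin.castLE hmn) := by
      have := congrArg FreeMonoid.toList hab
      simpa [g, FreeMonoid.toList_ofList] using this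
    exact List.map_injective_iff.mpr (Fin.strictMono_castLE hmn).injective h2
  have hb := ((FreeAlgebra.basisFreeMonoid R (Fin m)).linearIndependent.comp g hginj)
  have h3 := hb.map' E.symm.toLinearMap
    (LinearMap.ker_eq_bot_of_injective E.symm.injective)
  have heq : (⇑E.symm.toLinearMap ∘ (⇑(FreeAlgebra.basisFreeMonoid R (Fin m)) ∘ g))
      = fun l : {l : List (Fin n) // l.Nodup} =>
          (l.val.map fun j => TensorAlgebra.ι R (bV (Fin.castLE hmn j))).prod := by
    funext l
    show E.symm (FreeAlgebra.basisFreeMonoid R (Fin m) (g l)) = _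
    rw [basisFreeMonoid_apply, hg]
    rw [show FreeMonoid.toList (FreeMonoid.ofList (l.val.map (Fin.castLE hmn)))
        = l.val.map (Fin.castLE hmn) from rfl]
    rw [map_list_prod, List.map_map, List.map_map]
    refine congrArg List.prod (List.map_congr_left fun j _ => ?_)
    show E.symm (FreeAlgebra.ι R (Fin.castLE hmn j)) = _
    rw [TensorAlgebra.equivFreeAlgebra_symm_ι]
  rwa [heq] at h3

end Inj
end CohenProof
namespace CohenProof
open TensorProduct Coalgebra

section Final
variable (R : Type u) [CommRing R] (V : Type u) [AddCommGroup V] [Module R V]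

/-- Evaluation at a point, as a linear map on the convolution algebra. -/
noncomputable def evAt {C : Type u} [AddCommGroup C] [Module R C] [Coalgebra R C]
    {A : Type u} [Ring A] [Algebra R A] (pt : C) : ConvAlg R C A →ₗ[R] A where
  toFun f := ConvAlg.toLin f pt
  map_add' f g := rfl
  map_smul' r f := rfl

lemma theta_inj (n m : ℕ) (hmn : n ≤ m) (bV : Module.Basis (Fin m) R V) :
    Function.Injective (theta R V n) := by
  rw [injective_iff_map_eq_zero]
  intro a ha
  obtain ⟨b, rfl⟩ := RingQuot.mkAlgHom_surjective R (cohenRel R n) a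
  classical
  set e : {l : List (Fin n) // l.Nodup} → CohenAlgebra R n :=
    fun l => RingQuot.mkAlgHom R (cohenRel R n) ((l.val.map (FreeAlgebra.ι R)).prod) with he
  have hspan : RingQuot.mkAlgHom R (cohenRel R n) b ∈ Submodule.span R (Set.range e) := by
    have hb := freeAlgebra_mem_span_words R n b
    have himg : RingQuot.mkAlgHom R (cohenRel R n) b ∈
        Submodule.map (RingQuot.mkAlgHom R (cohenRel R n)).toLinearMap
          (Submodule.span R
            (Set.range fun l : List (Fin n) => (l.map (FreeAlgebra.ι R)).prod)) :=
      ⟨b, hb, rfl⟩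
    rw [Submodule.map_span] at himg
    refine Submodule.span_le.mpr ?_ himg
    rintro _ ⟨_, ⟨l, rfl⟩, rfl⟩
    by_cases hnod : l.Nodup
    · exact Submodule.subset_span ⟨⟨l, hnod⟩, rfl⟩
    · have hrel : cohenRel R n ((l.map (FreeAlgebra.ι R)).prod) 0 := by
        refine ⟨rfl, l.length, l.get, ?_, ?_⟩
        · exact fun h => hnod (List.nodup_iff_injective_get.mpr h)
        · rw [show (List.ofFn fun s => FreeAlgebra.ι R (l.get s))
              = (List.ofFn l.get).map (FreeAlgebra.ι R) from by rw [List.map_ofFn]; rfl,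
            List.ofFn_get]
      have hz : (RingQuot.mkAlgHom R (cohenRel R n)).toLinearMap
          ((l.map (FreeAlgebra.ι R)).prod) = 0 := by
        show RingQuot.mkAlgHom R (cohenRel R n) _ = 0
        rw [RingQuot.mkAlgHom_rel R hrel, map_zero]
      rw [hz]
      exact Submodule.zero_mem _
  obtain ⟨c, hc⟩ := Finsupp.mem_span_range_iff_exists_finsupp.mp hspan
  set pt := elemC R V n (fun i => ((1:R), bV (Fin.castLE hmn i))) with hpt
  set W : {l : List (Fin n) // l.Nodup} → TensorAlgebra R V :=
    fun l => (l.val.map fun j => TensorAlgebra.ι R (bV (Fin.castLE hmn j))).prod with hW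
  set Φ : CohenAlgebra R n →ₗ[R] TensorAlgebra R V :=
    (evAt R pt) ∘ₗ (theta R V n).toLinearMap with hPhi
  have hWl : ∀ l : {l : List (Fin n) // l.Nodup}, Φ (e l) = W l := by
    intro l
    show evAt R pt (theta R V n (e l)) = W l
    rw [he]
    show evAt R pt (theta R V n
      (RingQuot.mkAlgHom R (cohenRel R n) ((l.val.map (FreeAlgebra.ι R)).prod))) = W l
    rw [theta_mk, thetaFree_word]
    show wordC R V n l.val pt = W l
    rw [hpt, wordC_elemC, if_pos l.2]
    have h1 : (∏ i, if i ∈ l.val then (1:R)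
        else (((fun i => ((1:R), bV (Fin.castLE hmn i))) i)).1) = 1 :=
      Finset.prod_eq_one (fun i _ => by split <;> rfl)
    rw [h1, one_smul]
  have h1 : Φ (RingQuot.mkAlgHom R (cohenRel R n) b) = 0 := by
    show evAt R pt (theta R V n (RingQuot.mkAlgHom R (cohenRel R n) b)) = 0
    rw [ha, map_zero]
  have h3 : (c.sum fun l r => r • W l) = 0 := by
    calc c.sum (fun l r => r • W l)
        = c.sum (fun l r => r • Φ (e l)) :=
          Finsupp.sum_congr (fun l _ => by rw [hWl l])
      _ = c.sum (fun l r => Φ (r • e l)) :=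
          Finsupp.sum_congr (fun l _ => by rw [map_smul])
      _ = Φ (c.sum fun l r => r • e l) := (map_finsuppSum Φ c _).symm
      _ = Φ (RingQuot.mkAlgHom R (cohenRel R n) b) := by rw [hc]
      _ = 0 := h1
  have hli := words_linearIndependent R V n m hmn bV
  have hc0 : c = 0 := by
    refine linearIndependent_iff.mp hli c ?_
    rw [Finsupp.linearCombination_apply]
    exact h3
  rw [← hc, hc0, Finsupp.sum_zero_index]

end Final
end CohenProof


/-!
STATEMENT 6: For a free `R`-module `V` of rank `m ≥ n`, the algebra homomorphism
`θ_n : A^R(y_1,…,y_n) → Hom_R(C(V)^{⊗n}, T(V))` — which sends `y_j` to the map given by the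
`j`-th projection `C(V)^{⊗n} → C(V)` followed by `C(V) = R ⊕ V → V → T(V)`, and is an algebra
map into the convolution algebra — is injective.
-/

theorem theta_injective_at_free_module (R : Type u) [CommRing R]
    (V : Type u) [AddCommGroup V] [Module R V] (n m : ℕ) (hmn : n ≤ m)
    (bV : Module.Basis (Fin m) R V) :
    ∃ θ : CohenAlgebra R n → (Cpow R V n →ₗ[R] TensorAlgebra R V),
      -- `θ` is a homomorphism of `R`-algebras into the convolution algebra:
      (∀ a b : CohenAlgebra R n, θ (a + b) = θ a + θ b) ∧
      (∀ (c : R) (a : CohenAlgebra R n), θ (c • a) = c • θ a) ∧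
      θ 1 = convOne R (TensorAlgebra R V) ∧
      (∀ a b : CohenAlgebra R n, θ (a * b) = conv R (θ a) (θ b)) ∧
      -- `θ` sends `y_j` to `E ∘ q ∘ p_j`:
      (∀ (j : Fin n) (x : Fin n → R × V),
        θ (ya R j) (elemC R V n x)
          = (∏ i ∈ Finset.univ.erase j, (x i).1) • (TensorAlgebra.ι R (x j).2)) ∧
      -- and `θ` is injective:
      Function.Injective θ := by
  classical
  refine ⟨fun a => CohenProof.ConvAlg.toLin (CohenProof.theta R V n a),
    ?_, ?_, ?_, ?_, ?_, ?_⟩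
  · exact fun a b => map_add (CohenProof.theta R V n) a b
  · exact fun c a => map_smul (CohenProof.theta R V n) c a
  · exact map_one (CohenProof.theta R V n)
  · exact fun a b => map_mul (CohenProof.theta R V n) a b
  · intro j x
    have h := congrArg (fun F : CohenProof.ConvAlg R (Cpow R V n) (TensorAlgebra R V)
        => CohenProof.ConvAlg.toLin F (elemC R V n x))
      (CohenProof.theta_ya R V n j)
    refine h.trans ?_
    show (CohenProof.pj R V n j) (elemC R V n x) = _
    rw [CohenProof.pj_elemC]
    congr 1
    calc (∏ i, if i = j then (1:R) else (x i).1)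
        = ∏ i ∈ Finset.univ.erase j, (if i = j then (1:R) else (x i).1) :=
          (Finset.prod_erase (f := fun i => if i = j then (1:R) else (x i).1) (a := j) Finset.univ (if_pos rfl)).symm
      _ = ∏ i ∈ Finset.univ.erase j, (x i).1 :=
          Finset.prod_congr rfl fun i hi => if_neg (Finset.mem_erase.mp hi).1
  · exact fun a b h => CohenProof.theta_inj R V n m hmn bV h
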